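/- arXiv:2001.04152 — 3 statements merged into one kernel-verified Lean document; each statement's English description precedes it below -/
import Mathlib

section
/- Let X_L be a derivation on a commutative ring (of smooth functions) and suppose G satisfies X_L²(G) = -2(cL + c₀)G where X_L(L) = 0 and X_L(c) = X_L(c₀) = 0. Define recursively G₁ = G and G_{n+1} = X_L(G)·G_n + (1/n)·G·X_L(G_n). Then for every n ≥ 1, G_n = Σ_{k=0}^{⌊(n-1)/2⌋} binom(n, 2k+1) · (-2(cL+c₀))^k · G^{2k+1} · (X_L G)^{n-2k-1}. -/
private def auxF {A : Type*} [CommRing A] (a G w : A) (n k : ℕ) : A :=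
  (n.choose (2*k+1) : A) * a^k * G^(2*k+1) * w^(n-2*k-1)

private def auxP {A : Type*} [CommRing A] (a G w : A) (n k : ℕ) : A :=
  (((2*k+1) * n.choose (2*k+1) : ℕ) : A) * (a^k * G^(2*k+1) * w^(n-2*k))

private def auxQ {A : Type*} [CommRing A] (a G w : A) (n k : ℕ) : A :=
  (((n-2*k-1) * n.choose (2*k+1) : ℕ) : A) * (a^(k+1) * G^(2*k+3) * w^(n-2*k-2))

private def auxR {A : Type*} [CommRing A] (a G w : A) (n k : ℕ) : A :=
  if k = 0 then 0 else auxQ a G w n (k-1)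

private lemma auxD {A : Type*} [CommRing A] [Algebra ℚ A]
    (X : Derivation ℚ A A) (a G w : A) (ha : X a = 0) (hXG : X G = w)
    (hXw : X w = a * G) (n k : ℕ) :
    G * X (auxF a G w n k) = auxP a G w n k + auxQ a G w n k := by
  by_cases h : 2*k+1 ≤ n
  · obtain ⟨t, rfl⟩ : ∃ t, n = 2*k+1+t := ⟨n-(2*k+1), by omega⟩
    simp only [auxF, auxP, auxQ, Derivation.leibniz, Derivation.leibniz_pow,
      Derivation.map_natCast, ha, hXG, hXw, smul_eq_mul, nsmul_eq_mul,
      Nat.add_sub_cancel, mul_zero, zero_mul, smul_zero, zero_add, add_zero]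
    rw [show 2*k+1+t-2*k-2 = t-1 by omega, show 2*k+1+t-2*k-1 = t by omega,
        show 2*k+1+t-2*k = t+1 by omega]
    push_cast
    ring
  · have hc0 : n.choose (2*k+1) = 0 := Nat.choose_eq_zero_of_lt (by omega)
    simp [auxF, auxP, auxQ, hc0]

private lemma auxNI (n k : ℕ) (hk : 1 ≤ k) (h : 2*k+1 ≤ n) :
    n * (n+1).choose (2*k+1)
      = n * n.choose (2*k+1) + (2*k+1) * n.choose (2*k+1)
        + (n - 2*k + 1) * n.choose (2*k-1) := by
  have i1 : n.choose (2*k+1) * (2*k+1) = n.choose (2*k) * (n - 2*k) :=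
    Nat.choose_succ_right_eq n (2*k)
  have i2 : n.choose (2*k) * (2*k) = n.choose (2*k-1) * (n - (2*k-1)) := by
    have h' := Nat.choose_succ_right_eq n (2*k-1)
    rwa [show 2*k-1+1 = 2*k by omega] at h'
  have i3 : (n+1).choose (2*k+1) = n.choose (2*k) + n.choose (2*k+1) :=
    Nat.choose_succ_succ n (2*k)
  have j1 : (n-2*k) * n.choose (2*k) = (2*k+1) * n.choose (2*k+1) := by
    rw [mul_comm, ← i1, mul_comm]
  have j2 : (2*k) * n.choose (2*k) = (n - 2*k + 1) * n.choose (2*k-1) := by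
    rw [mul_comm, i2, mul_comm, show n - (2*k-1) = n - 2*k + 1 by omega]
  have e : n * n.choose (2*k) = (n-2*k) * n.choose (2*k) + (2*k) * n.choose (2*k) := by
    rw [← add_mul]; congr 1; omega
  calc n * (n+1).choose (2*k+1)
      = n * n.choose (2*k) + n * n.choose (2*k+1) := by rw [i3, mul_add]
    _ = ((n-2*k) * n.choose (2*k) + (2*k) * n.choose (2*k)) + n * n.choose (2*k+1) := by
        rw [e]
    _ = ((2*k+1) * n.choose (2*k+1) + (n - 2*k + 1) * n.choose (2*k-1))
          + n * n.choose (2*k+1) := by rw [j1, j2]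
    _ = _ := by ring

private lemma auxCI {A : Type*} [CommRing A] (a G w : A) (n k : ℕ) (hn : 1 ≤ n) :
    (n : A) * auxF a G w (n+1) k
      = (n : A) * (w * auxF a G w n k) + auxP a G w n k + auxR a G w n k := by
  by_cases hk0 : k = 0
  · subst hk0
    simp only [auxF, auxP, auxR, if_pos rfl, add_zero]
    rw [show n + 1 - 2*0 - 1 = (n - 2*0 - 1) + 1 by omega,
        show n - 2*0 = (n - 2*0 - 1) + 1 by omega]
    simp only [Nat.mul_zero, Nat.zero_add, Nat.choose_one_right, Nat.one_mul]
    push_cast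
    ring
  · by_cases h : 2*k+1 ≤ n
    · have NI := auxNI n k (by omega) h
      rw [show n - 2*k + 1 = (n - 2*k - 1) + 2 by omega] at NI
      have NIA := congrArg (Nat.cast : ℕ → A) NI
      push_cast at NIA
      simp only [auxF, auxP, auxR, auxQ, if_neg hk0]
      rw [show n + 1 - 2*k - 1 = (n - 2*k - 1) + 1 by omega,
          show n - 2*k = (n - 2*k - 1) + 1 by omega,
          show (k-1)+1 = k by omega,
          show 2*(k-1)+3 = 2*k+1 by omega,
          show n - 2*(k-1) - 2 = (n - 2*k - 1) + 1 by omega,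
          show 2*(k-1)+1 = 2*k-1 by omega,
          show n - 2*(k-1) - 1 = (n - 2*k - 1) + 2 by omega]
      push_cast
      linear_combination (a^k * G^(2*k+1) * w^((n-2*k-1)+1)) * NIA
    · have hc1 : n.choose (2*k+1) = 0 := Nat.choose_eq_zero_of_lt (by omega)
      simp only [auxF, auxP, auxR, auxQ, hc1, Nat.cast_zero, zero_mul, mul_zero,
        Nat.mul_zero, add_zero, zero_add, if_neg hk0]
      by_cases h2 : 2*k = n
      · have hk1 : 1 ≤ k := by omega
        obtain rfl : n = 2*k := h2.symm
        rw [show 2*k+1 = 2*k+1 by omega, Nat.choose_self,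
            show 2*k - 2*(k-1) - 1 = 1 by omega,
            show 2*(k-1)+1 = 2*k - 1 by omega,
            Nat.choose_symm (by omega : 1 ≤ 2*k), Nat.choose_one_right,
            show 2*k - 2*(k-1) - 2 = 0 by omega,
            show 2*(k-1)+3 = 2*k+1 by omega,
            show (k-1)+1 = k by omega,
            show 2*k + 1 - 2*k - 1 = 0 by omega]
        push_cast
        ring
      · have hgt : 2*k > n := by omega
        have hs : (n+1).choose (2*k+1) = 0 := Nat.choose_eq_zero_of_lt (by omega)
        rw [hs]
        have hz : (n - 2*(k-1) - 1) * n.choose (2*(k-1)+1) = 0 := by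
          by_cases h3 : 2*(k-1)+1 ≤ n
          · have : n - 2*(k-1) - 1 = 0 := by omega
            rw [this, zero_mul]
          · rw [Nat.choose_eq_zero_of_lt (by omega), mul_zero]
        rw [hz]
        push_cast
        ring

theorem stmt4 {A : Type*} [CommRing A] [Algebra ℚ A]
    (X : Derivation ℚ A A) (L c c₀ G : A)
    (hL : X L = 0) (hc : X c = 0) (hc₀ : X c₀ = 0)
    (hG : X (X G) = -2 * (c * L + c₀) * G)
    (Gseq : ℕ → A) (h1 : Gseq 1 = G)
    (hrec : ∀ n : ℕ, 1 ≤ n →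
      Gseq (n + 1) = X G * Gseq n + ((1 : ℚ) / n) • (G * X (Gseq n))) :
    ∀ n : ℕ, 1 ≤ n →
      Gseq n = ∑ k ∈ Finset.range ((n - 1) / 2 + 1),
        (n.choose (2 * k + 1) : A) * (-2 * (c * L + c₀)) ^ k *
          G ^ (2 * k + 1) * (X G) ^ (n - 2 * k - 1) := by
  have h2A : X (2 : A) = 0 := by
    rw [show (2:A) = ((2:ℕ):A) by norm_num, Derivation.map_natCast]
  have ha : X (-2 * (c * L + c₀)) = 0 := by simp [hL, hc, hc₀, h2A]
  set a : A := -2 * (c * L + c₀) with hadef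
  set w : A := X G with hwdef
  have hXw : X w = a * G := hG
  have hXG : X G = w := rfl
  have hsm : ∀ (m : ℕ), 1 ≤ m → ∀ x : A, ((1:ℚ)/m) • ((m:A) * x) = x := by
    intro m hm x
    have hm0 : (m:ℚ) ≠ 0 := Nat.cast_ne_zero.mpr (by omega)
    have : ((m:A)) * x = (m:ℚ) • x := by
      rw [Algebra.smul_def, map_natCast]
    rw [this, smul_smul, one_div, inv_mul_cancel₀ hm0, one_smul]
  have main : ∀ m : ℕ, 1 ≤ m → Gseq m = ∑ k ∈ Finset.range m, auxF a G w m k := by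
    intro m hm
    induction m, hm using Nat.le_induction with
    | base => simp [h1, auxF]
    | succ m hm ih =>
      rw [hrec m hm, ih]
      have hGXT : G * X (∑ k ∈ Finset.range m, auxF a G w m k)
          = ∑ k ∈ Finset.range m, (auxP a G w m k + auxQ a G w m k) := by
        rw [map_sum, Finset.mul_sum]
        exact Finset.sum_congr rfl fun k _ => auxD X a G w ha hXG hXw m k
      have hFmm : auxF a G w m m = 0 := by
        simp [auxF, Nat.choose_eq_zero_of_lt (by omega : m < 2*m+1)]
      have hPmm : auxP a G w m m = 0 := by
        simp [auxP, Nat.choose_eq_zero_of_lt (by omega : m < 2*m+1)]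
      have hsumQ : ∑ k ∈ Finset.range (m+1), auxR a G w m k
          = ∑ k ∈ Finset.range m, auxQ a G w m k := by
        rw [Finset.sum_range_succ']
        simp [auxR]
      calc X G * ∑ k ∈ Finset.range m, auxF a G w m k
            + ((1:ℚ)/m) • (G * X (∑ k ∈ Finset.range m, auxF a G w m k))
          = (∑ k ∈ Finset.range m, w * auxF a G w m k)
            + ((1:ℚ)/m) • (∑ k ∈ Finset.range m, auxP a G w m k
              + ∑ k ∈ Finset.range m, auxQ a G w m k) := by
            rw [hGXT, Finset.mul_sum, Finset.sum_add_distrib]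
        _ = (∑ k ∈ Finset.range (m+1), w * auxF a G w m k)
            + ((1:ℚ)/m) • (∑ k ∈ Finset.range (m+1), auxP a G w m k
              + ∑ k ∈ Finset.range (m+1), auxR a G w m k) := by
            rw [Finset.sum_range_succ, Finset.sum_range_succ (f := fun k => auxP a G w m k),
              hFmm, hPmm, hsumQ, mul_zero, add_zero, add_zero]
        _ = ∑ k ∈ Finset.range (m+1),
              (w * auxF a G w m k + ((1:ℚ)/m) • (auxP a G w m k + auxR a G w m k)) := by
            rw [← Finset.sum_add_distrib, Finset.smul_sum, ← Finset.sum_add_distrib]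
        _ = ∑ k ∈ Finset.range (m+1), auxF a G w (m+1) k := by
            refine Finset.sum_congr rfl fun k _ => ?_
            have CI := auxCI a G w m k hm
            calc w * auxF a G w m k + ((1:ℚ)/m) • (auxP a G w m k + auxR a G w m k)
                = ((1:ℚ)/m) • ((m:A) * (w * auxF a G w m k)
                    + (auxP a G w m k + auxR a G w m k)) := by
                  conv_rhs => rw [smul_add, hsm m hm]
              _ = ((1:ℚ)/m) • ((m:A) * auxF a G w (m+1) k) := by
                  rw [CI]; rw [add_assoc]
              _ = auxF a G w (m+1) k := hsm m hm _
  intro n hn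
  rw [main n hn]
  refine (Finset.sum_subset (Finset.range_subset_range.mpr (by omega)) ?_).symm
  intro k _ hk
  have : n < 2*k+1 := by
    simp only [Finset.mem_range, not_lt] at hk
    omega
  simp [auxF, Nat.choose_eq_zero_of_lt this]
end

section
/- Under the hypotheses X_L²(G) = -2(cL+c₀)G, with L, c, c₀ annihilated by the derivation X_L, and G_n defined by the recursion G₁ = G, G_{n+1} = X_L(G)G_n + (1/n)G X_L(G_n), the n-th term satisfies X_L²(G_n) = -2n²(cL + c₀)G_n. -/
theorem stmt5 {A : Type*} [CommRing A] [Algebra ℚ A]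
    (X : Derivation ℚ A A) (L c c₀ G : A)
    (hL : X L = 0) (hc : X c = 0) (hc₀ : X c₀ = 0)
    (hG : X (X G) = -2 * (c * L + c₀) * G)
    (Gseq : ℕ → A) (h1 : Gseq 1 = G)
    (hrec : ∀ n : ℕ, 1 ≤ n →
      Gseq (n + 1) = X G * Gseq n + ((1 : ℚ) / n) • (G * X (Gseq n))) :
    ∀ n : ℕ, 1 ≤ n →
      X (X (Gseq n)) = -2 * (n : A) ^ 2 * (c * L + c₀) * Gseq n := by
  intro n hn
  induction n with
  | zero => exact absurd hn (by omega)
  | succ m ih =>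
    rcases Nat.lt_or_ge m 1 with hm | hm
    · interval_cases m
      rw [h1]
      push_cast
      linear_combination hG
    · have ihm := ih hm
      set r := algebraMap ℚ A ((1:ℚ)/m) with hrdef
      have hr : (m : A) * r = 1 := by
        rw [hrdef, ← map_natCast (algebraMap ℚ A) m, ← map_mul,
          ← map_one (algebraMap ℚ A)]
        congr 1
        have : (m : ℚ) ≠ 0 := by positivity
        field_simp
      have hXr : X r = 0 := Derivation.map_algebraMap X _
      have hX2 : X (2 : A) = 0 := by
        have h22 : ((2 : ℕ) : A) = (2 : A) := by norm_num
        rw [← h22, ← map_natCast (algebraMap ℚ A)]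
        exact Derivation.map_algebraMap X _
      have hXm : X ((m : A)) = 0 := by
        rw [← map_natCast (algebraMap ℚ A) m]
        exact Derivation.map_algebraMap X _
      have hXm2 : X ((m : A) ^ 2) = 0 := by
        rw [sq]
        simp [Derivation.leibniz, hXm]
      have hG3 : X (X (X G)) = -2 * (c * L + c₀) * X G := by
        rw [hG]
        simp only [Derivation.leibniz, map_add, map_neg, map_mul, smul_eq_mul,
          map_zero, hL, hc, hc₀, hX2, hXm, hXm2]
        ring
      have hg3 : X (X (X (Gseq m))) = -2 * (m : A) ^ 2 * (c * L + c₀) * X (Gseq m) := by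
        rw [ihm]
        simp only [Derivation.leibniz, map_add, map_neg, map_mul, smul_eq_mul,
          map_zero, hL, hc, hc₀, hX2, hXm, hXm2]
        ring
      rw [hrec m hm, Algebra.smul_def, ← hrdef]
      simp only [map_add, Derivation.leibniz, smul_eq_mul, map_zero, hXr]
      push_cast
      linear_combination (Gseq m) * hG3 + (2 + r) * X (Gseq m) * hG +
        (1 + 2 * r) * X G * ihm + r * G * hg3 +
        (-4 * (m : A) * (c * L + c₀) * X G * Gseq m +
          4 * (c * L + c₀) * G * X (Gseq m)) * hr
end

section
/- Let L = α k² ln(4X̃₁² + Ỹ₂²/k²) with canonical Poisson structure {X̃₁, Ỹ₁} = {X̃₂, Ỹ₂} = 1, all other brackets zero, on the open set where 4X̃₁² + Ỹ₂²/k² > 0 and Ỹ₂ ≠ 0. Let Q₂ = k² e^{L/(αk²)}. Then G = sin(√(2c₀) Q₂ X̃₂ / (2αk² Ỹ₂)) satisfies X_L²(G) = -2c₀ G. -/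
/-- Phase space ℝ⁴ with coordinates (X̃₁, Ỹ₁, X̃₂, Ỹ₂). -/
abbrev Phase4 : Type := ℝ × ℝ × ℝ × ℝ

/-- Hamiltonian vector field X_L f = {f, L} for the canonical bracket
{X̃₁,Ỹ₁} = {X̃₂,Ỹ₂} = 1, all other brackets zero. -/
noncomputable def XLop (L f : Phase4 → ℝ) (p : Phase4) : ℝ :=
  fderiv ℝ f p (1, 0, 0, 0) * fderiv ℝ L p (0, 1, 0, 0) -
    fderiv ℝ f p (0, 1, 0, 0) * fderiv ℝ L p (1, 0, 0, 0) +
  fderiv ℝ f p (0, 0, 1, 0) * fderiv ℝ L p (0, 0, 0, 1) -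
    fderiv ℝ f p (0, 0, 0, 1) * fderiv ℝ L p (0, 0, 1, 0)

/-!
`L` depends only on `X̃₁` and `Ỹ₂`, so `X_L` acts on functions independent of `Ỹ₁` as
`∂L/∂Ỹ₂ · ∂/∂X̃₂`, and the frequency `ω = √(2c₀) Q₂ / (2αk² Ỹ₂)` of `G = sin (ω X̃₂)` is again a
function of `X̃₁, Ỹ₂` alone. Since `ω · ∂L/∂Ỹ₂ = √(2c₀)` is constant, `X_L` maps `φ (ω X̃₂)` to
`√(2c₀) φ' (ω X̃₂)`, and applying it twice to `sin` gives `-2c₀ sin`.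
-/

open Filter Topology

theorem fderiv_apply_eq_zero_of_forall_add_smul {E F : Type*} [NormedAddCommGroup E]
    [NormedSpace ℝ E] [NormedAddCommGroup F] [NormedSpace ℝ F] {f : E → F} {p w : E}
    (h : ∀ t : ℝ, f (p + t • w) = f p) : fderiv ℝ f p w = 0 := by
  by_cases hf : DifferentiableAt ℝ f p
  · rw [← hf.lineDeriv_eq_fderiv, lineDeriv]
    simp [h]
  · rw [fderiv_zero_of_not_differentiableAt hf]
    rfl

theorem XLop_congr_of_eventuallyEq {L f g : Phase4 → ℝ} {p : Phase4} (h : f =ᶠ[𝓝 p] g) :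
    XLop L f p = XLop L g p := by
  simp only [XLop, h.fderiv_eq]

def DependsOnlyOnX₁Y₂ (f : Phase4 → ℝ) : Prop :=
  ∀ q q' : Phase4, q.1 = q'.1 → q.2.2.2 = q'.2.2.2 → f q = f q'

namespace DependsOnlyOnX₁Y₂

variable {f : Phase4 → ℝ}

theorem apply_add_smul_e₂ (hf : DependsOnlyOnX₁Y₂ f) (p : Phase4) (t : ℝ) :
    f (p + t • (0, 1, 0, 0)) = f p :=
  hf _ _ (by simp) (by simp)

theorem apply_add_smul_e₃ (hf : DependsOnlyOnX₁Y₂ f) (p : Phase4) (t : ℝ) :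
    f (p + t • (0, 0, 1, 0)) = f p :=
  hf _ _ (by simp) (by simp)

theorem fderiv_apply_e₂ (hf : DependsOnlyOnX₁Y₂ f) (p : Phase4) :
    fderiv ℝ f p (0, 1, 0, 0) = 0 :=
  fderiv_apply_eq_zero_of_forall_add_smul (hf.apply_add_smul_e₂ p)

theorem fderiv_apply_e₃ (hf : DependsOnlyOnX₁Y₂ f) (p : Phase4) :
    fderiv ℝ f p (0, 0, 1, 0) = 0 :=
  fderiv_apply_eq_zero_of_forall_add_smul (hf.apply_add_smul_e₃ p)

end DependsOnlyOnX₁Y₂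

noncomputable def wave (φ : ℝ → ℝ) (ω : Phase4 → ℝ) (q : Phase4) : ℝ :=
  φ (ω q * q.2.2.1)

section Wave

variable {φ φ' φ'' : ℝ → ℝ} {ω L : Phase4 → ℝ} {p : Phase4} {d : ℝ}

theorem fderiv_wave_e₂ (hω : DependsOnlyOnX₁Y₂ ω) (p : Phase4) :
    fderiv ℝ (wave φ ω) p (0, 1, 0, 0) = 0 :=
  fderiv_apply_eq_zero_of_forall_add_smul fun t => by
    simp only [wave, hω.apply_add_smul_e₂]
    simp

theorem fderiv_wave_e₃ (hω : DependsOnlyOnX₁Y₂ ω) (hωp : DifferentiableAt ℝ ω p)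
    (hφ : HasDerivAt φ d (ω p * p.2.2.1)) :
    fderiv ℝ (wave φ ω) p (0, 0, 1, 0) = d * ω p := by
  have hdiff : DifferentiableAt ℝ (wave φ ω) p :=
    hφ.differentiableAt.comp p (hωp.mul (by fun_prop))
  have hline : HasLineDerivAt ℝ (wave φ ω) (d * ω p) p (0, 0, 1, 0) := by
    have hrestrict : (fun t : ℝ => wave φ ω (p + t • (0, 0, 1, 0))) =
        φ ∘ fun t => ω p * (p.2.2.1 + t) := by
      funext t
      simp only [wave, hω.apply_add_smul_e₃, Function.comp]
      simp
    have hinner : HasDerivAt (fun t : ℝ => ω p * (p.2.2.1 + t)) (ω p) 0 := by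
      simpa using ((hasDerivAt_id (0 : ℝ)).const_add p.2.2.1).const_mul (ω p)
    rw [← add_zero p.2.2.1] at hφ
    rw [HasLineDerivAt, hrestrict]
    exact hφ.comp 0 hinner
  exact (hdiff.hasFDerivAt.hasLineDerivAt _).unique hline

theorem XLop_wave (hL : DependsOnlyOnX₁Y₂ L) (hω : DependsOnlyOnX₁Y₂ ω)
    (hωp : DifferentiableAt ℝ ω p) (hφ : HasDerivAt φ d (ω p * p.2.2.1)) :
    XLop L (wave φ ω) p = d * (ω p * fderiv ℝ L p (0, 0, 0, 1)) := by
  rw [XLop, hL.fderiv_apply_e₂, hL.fderiv_apply_e₃, fderiv_wave_e₂ hω,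
    fderiv_wave_e₃ hω hωp hφ]
  ring

theorem XLop_XLop_wave {c : ℝ} (hL : DependsOnlyOnX₁Y₂ L) (hω : DependsOnlyOnX₁Y₂ ω)
    (hωd : ∀ᶠ q in 𝓝 p, DifferentiableAt ℝ ω q)
    (hres : ∀ᶠ q in 𝓝 p, ω q * fderiv ℝ L q (0, 0, 0, 1) = c)
    (hφ : ∀ x, HasDerivAt φ (φ' x) x) (hφ' : ∀ x, HasDerivAt φ' (φ'' x) x) :
    XLop L (XLop L (wave φ ω)) p = c ^ 2 * φ'' (ω p * p.2.2.1) := by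
  have hfirst : XLop L (wave φ ω) =ᶠ[𝓝 p] wave (fun x => c * φ' x) ω :=
    (hωd.and hres).mono fun q ⟨hωq, hresq⟩ => by
      rw [XLop_wave hL hω hωq (hφ _), hresq, wave]
      ring
  rw [XLop_congr_of_eventuallyEq hfirst,
    XLop_wave hL hω hωd.self_of_nhds ((hφ' _).const_mul c), hres.self_of_nhds]
  ring

end Wave

section PointVortex

variable {α k c₀ : ℝ} {q : Phase4}

noncomputable def vortexL (α k : ℝ) (q : Phase4) : ℝ :=
  α * k ^ 2 * Real.log (4 * q.1 ^ 2 + q.2.2.2 ^ 2 / k ^ 2)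

noncomputable def vortexFrequency (α k c₀ : ℝ) (q : Phase4) : ℝ :=
  √(2 * c₀) * (k ^ 2 * Real.exp (vortexL α k q / (α * k ^ 2))) / (2 * α * k ^ 2 * q.2.2.2)

theorem dependsOnlyOnX₁Y₂_vortexL : DependsOnlyOnX₁Y₂ (vortexL α k) := by
  intro q q' h₁ h₄
  simp only [vortexL, h₁, h₄]

theorem dependsOnlyOnX₁Y₂_vortexFrequency : DependsOnlyOnX₁Y₂ (vortexFrequency α k c₀) := by
  intro q q' h₁ h₄
  simp only [vortexFrequency, dependsOnlyOnX₁Y₂_vortexL q q' h₁ h₄, h₄]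

theorem exp_vortexL_div (hα : α ≠ 0) (hk : k ≠ 0) (hS : 0 < 4 * q.1 ^ 2 + q.2.2.2 ^ 2 / k ^ 2) :
    Real.exp (vortexL α k q / (α * k ^ 2)) = 4 * q.1 ^ 2 + q.2.2.2 ^ 2 / k ^ 2 := by
  rw [vortexL, mul_div_cancel_left₀ _ (by positivity), Real.exp_log hS]

theorem differentiableAt_vortexL (hS : 4 * q.1 ^ 2 + q.2.2.2 ^ 2 / k ^ 2 ≠ 0) :
    DifferentiableAt ℝ (vortexL α k) q := by
  unfold vortexL
  fun_prop (disch := exact hS)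

theorem differentiableAt_vortexFrequency (hα : α ≠ 0) (hk : k ≠ 0)
    (hS : 4 * q.1 ^ 2 + q.2.2.2 ^ 2 / k ^ 2 ≠ 0) (hy : q.2.2.2 ≠ 0) :
    DifferentiableAt ℝ (vortexFrequency α k c₀) q := by
  have := differentiableAt_vortexL (α := α) hS
  unfold vortexFrequency
  fun_prop (disch := positivity)

theorem hasLineDerivAt_vortexL_e₄ (hS : 0 < 4 * q.1 ^ 2 + q.2.2.2 ^ 2 / k ^ 2) :
    HasLineDerivAt ℝ (vortexL α k)
      (α * k ^ 2 * (2 * q.2.2.2 / k ^ 2 / (4 * q.1 ^ 2 + q.2.2.2 ^ 2 / k ^ 2))) q (0, 0, 0, 1) := by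
  have hrestrict : (fun t : ℝ => vortexL α k (q + t • (0, 0, 0, 1))) =
      fun t => α * k ^ 2 * Real.log (4 * q.1 ^ 2 + (q.2.2.2 + t) ^ 2 / k ^ 2) := by
    funext t
    simp [vortexL]
  have hsum : HasDerivAt (fun t : ℝ => 4 * q.1 ^ 2 + (q.2.2.2 + t) ^ 2 / k ^ 2)
      (2 * q.2.2.2 / k ^ 2) 0 := by
    simpa using ((((hasDerivAt_id (0 : ℝ)).const_add q.2.2.2).fun_pow 2).div_const
      (k ^ 2)).const_add (4 * q.1 ^ 2)
  rw [HasLineDerivAt, hrestrict]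
  simpa using (hsum.log (by simpa using hS.ne')).const_mul (α * k ^ 2)

theorem fderiv_vortexL_e₄ (hk : k ≠ 0) (hS : 0 < 4 * q.1 ^ 2 + q.2.2.2 ^ 2 / k ^ 2) :
    fderiv ℝ (vortexL α k) q (0, 0, 0, 1) =
      2 * α * q.2.2.2 / (4 * q.1 ^ 2 + q.2.2.2 ^ 2 / k ^ 2) := by
  rw [(differentiableAt_vortexL hS.ne').hasFDerivAt.hasLineDerivAt _ |>.unique
    (hasLineDerivAt_vortexL_e₄ hS)]
  field_simp

theorem vortexFrequency_mul_fderiv_vortexL (hα : α ≠ 0) (hk : k ≠ 0)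
    (hS : 0 < 4 * q.1 ^ 2 + q.2.2.2 ^ 2 / k ^ 2) (hy : q.2.2.2 ≠ 0) :
    vortexFrequency α k c₀ q * fderiv ℝ (vortexL α k) q (0, 0, 0, 1) = √(2 * c₀) := by
  rw [fderiv_vortexL_e₄ hk hS, vortexFrequency, exp_vortexL_div hα hk hS]
  field_simp

end PointVortex

theorem stmt10 (α k c₀ : ℝ) (hα : α = 1 / (8 * Real.pi)) (hk : 0 < k) (hc₀ : 0 < c₀)
    (L : Phase4 → ℝ)
    (hL : ∀ p : Phase4, L p = α * k ^ 2 * Real.log (4 * p.1 ^ 2 + p.2.2.2 ^ 2 / k ^ 2))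
    (Q₂ : Phase4 → ℝ) (hQ₂ : ∀ p, Q₂ p = k ^ 2 * Real.exp (L p / (α * k ^ 2)))
    (G : Phase4 → ℝ)
    (hG : ∀ p : Phase4,
      G p = Real.sin (Real.sqrt (2 * c₀) * Q₂ p * p.2.2.1 / (2 * α * k ^ 2 * p.2.2.2))) :
    ∀ p : Phase4, 4 * p.1 ^ 2 + p.2.2.2 ^ 2 / k ^ 2 > 0 → p.2.2.2 ≠ 0 →
      XLop L (XLop L G) p = -2 * c₀ * G p := by
  intro p hS hy
  have hα₀ : α ≠ 0 := by rw [hα]; positivity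
  obtain rfl : L = vortexL α k := funext hL
  obtain rfl : G = wave Real.sin (vortexFrequency α k c₀) :=
    funext fun q => by rw [hG, hQ₂, wave, vortexFrequency, mul_div_right_comm]
  have hnear : ∀ᶠ q in 𝓝 p, 0 < 4 * q.1 ^ 2 + q.2.2.2 ^ 2 / k ^ 2 ∧ q.2.2.2 ≠ 0 := by
    have hU : IsOpen ({q : Phase4 | 0 < 4 * q.1 ^ 2 + q.2.2.2 ^ 2 / k ^ 2} ∩
        {q : Phase4 | q.2.2.2 ≠ 0}) :=
      (isOpen_lt continuous_const (by fun_prop)).inter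
        (isOpen_ne_fun (by fun_prop) continuous_const)
    exact hU.mem_nhds ⟨hS, hy⟩
  rw [XLop_XLop_wave dependsOnlyOnX₁Y₂_vortexL dependsOnlyOnX₁Y₂_vortexFrequency
    (hnear.mono fun q hq => differentiableAt_vortexFrequency hα₀ hk.ne' hq.1.ne' hq.2)
    (hnear.mono fun q hq => vortexFrequency_mul_fderiv_vortexL hα₀ hk.ne' hq.1 hq.2)
    Real.hasDerivAt_sin Real.hasDerivAt_cos, Real.sq_sqrt (by positivity), wave]
  ring
end
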